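/- arXiv:2509.11904 — 2 statements merged into one kernel-verified Lean document; each statement's English description precedes it below -/
import Mathlib

section
/- In the Uniform model, fix nodes u < v. For each w with u < w ≤ v, the node w lies on the routing path from u to v with a height increase into w (i.e., is part of the ascending phase) if and only if h(w) > h(x) for all x ∈ [u, w−1], and this event has probability exactly 1/(w − u + 1). -/
open scoped Classical ENNReal NNReal
open MeasureTheory ProbabilityTheory

namespace P2P

variable {n : ℕ}

/-- Edge relation of a (continuous) skip list network: `u` and `v` are neighbors iff no node
strictly between them has height at least `min (h u) (h v)`. -/
def IsEdge {α : Type*} [LinearOrder α] (h : Fin n → α) (u v : Fin n) : Prop :=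
  u ≠ v ∧ ∀ x : Fin n, min u v < x → x < max u v → h x < min (h u) (h v)

/-- The greedy next hop from `x` towards destination `v`. -/
noncomputable def nextHop {α : Type*} [LinearOrder α] (h : Fin n → α) (v x : Fin n) : Fin n :=
  if x < v then WithBot.unbotD x (Finset.univ.filter fun y => IsEdge h x y ∧ x < y ∧ y ≤ v).max
  else if v < x then WithTop.untopD x (Finset.univ.filter fun y => IsEdge h x y ∧ v ≤ y ∧ y < x).min
  else x

/-- The greedy routing path from `x` to `v`, with fuel. -/
noncomputable def routeAux {α : Type*} [LinearOrder α] (h : Fin n → α) (v : Fin n) :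
    ℕ → Fin n → List (Fin n)
  | 0, x => [x]
  | fuel + 1, x => if x = v then [x] else x :: routeAux h v fuel (nextHop h v x)

/-- The greedy routing path from `u` to `v` (as a list of visited nodes, starting at `u`
and ending at `v`). -/
noncomputable def route {α : Type*} [LinearOrder α] (h : Fin n → α) (u v : Fin n) :
    List (Fin n) :=
  routeAux h v n u

/-- The routing path length (number of hops) from `u` to `v`. -/
noncomputable def dist {α : Type*} [LinearOrder α] (h : Fin n → α) (u v : Fin n) : ℕ :=
  (route h u v).length - 1


/-- The degree of `u`: its number of neighbors. -/
noncomputable def degree {α : Type*} [LinearOrder α] (h : Fin n → α) (u : Fin n) : ℕ :=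
  (Finset.univ.filter fun w => IsEdge h u w).card

/-- `w` lies on the routing path from `u` to `v` with a height increase into `w`:
the node visited just before `w` on the path has strictly smaller height. -/
def ascendsTo {α : Type*} [LinearOrder α] (h : Fin n → α) (u v w : Fin n) : Prop :=
  ∃ (l₁ l₂ : List (Fin n)) (a : Fin n), route h u v = l₁ ++ a :: w :: l₂ ∧ h a < h w

section Det


variable {α : Type*} [LinearOrder α] {h : Fin n → α} {u v x w : Fin n}

/-- `w` is a strict record of `h` over `[u, w]`. -/
def isRecord {α : Type*} [LinearOrder α] (h : Fin n → α) (u w : Fin n) : Prop :=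
  ∀ z, u ≤ z → z < w → h z < h w

lemma routeAux_head (h : Fin n → α) (v : Fin n) (fuel : ℕ) (x : Fin n) :
    ∃ t, routeAux h v fuel x = x :: t := by
  cases fuel with
  | zero => exact ⟨[], rfl⟩
  | succ f =>
    by_cases hx : x = v
    · exact ⟨[], by simp [routeAux, hx]⟩
    · exact ⟨routeAux h v f (nextHop h v x), by rw [routeAux, if_neg hx]⟩

lemma isEdge_between {x y z : Fin n} (hxy : x < y) (e : IsEdge h x y)
    (h1 : x < z) (h2 : z < y) : h z < min (h x) (h y) :=
  e.2 z (by rwa [min_eq_left hxy.le]) (by rwa [max_eq_right hxy.le])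

lemma nextHop_filter_nonempty (h : Fin n → α) (hxv : x < v) :
    (Finset.univ.filter fun y => IsEdge h x y ∧ x < y ∧ y ≤ v).Nonempty := by
  have hvn : (v : ℕ) < n := v.isLt
  have hxvn : (x : ℕ) < (v : ℕ) := hxv
  refine ⟨⟨(x : ℕ) + 1, by omega⟩, ?_⟩
  rw [Finset.mem_filter]
  have hlt : x < (⟨(x : ℕ) + 1, by omega⟩ : Fin n) := by
    rw [Fin.lt_def]; simp
  refine ⟨Finset.mem_univ _, ⟨ne_of_lt hlt, ?_⟩, hlt, ?_⟩
  · intro z h1 h2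
    rw [min_eq_left hlt.le] at h1
    rw [max_eq_right hlt.le] at h2
    rw [Fin.lt_def] at h1 h2
    simp at h2
    omega
  · rw [Fin.le_def]; simpa using hxvn

lemma nextHop_spec (h : Fin n → α) (hxv : x < v) :
    IsEdge h x (nextHop h v x) ∧ x < nextHop h v x ∧ nextHop h v x ≤ v ∧
      ∀ z, IsEdge h x z → x < z → z ≤ v → z ≤ nextHop h v x := by
  classical
  have hne : (Finset.univ.filter fun y => IsEdge h x y ∧ x < y ∧ y ≤ v).Nonempty :=
    nextHop_filter_nonempty h hxv
  obtain ⟨m, hm⟩ := Finset.max_of_nonempty hne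
  have hnh : nextHop h v x = m := by rw [nextHop, if_pos hxv, hm]; rfl
  have hmem := Finset.mem_of_max hm
  rw [Finset.mem_filter] at hmem
  rw [hnh]
  refine ⟨hmem.2.1, hmem.2.2.1, hmem.2.2.2, ?_⟩
  intro z hz1 hz2 hz3
  have hzm : z ∈ Finset.univ.filter fun y => IsEdge h x y ∧ x < y ∧ y ≤ v :=
    Finset.mem_filter.2 ⟨Finset.mem_univ _, hz1, hz2, hz3⟩
  have := Finset.le_max hzm
  rw [hm] at this
  exact_mod_cast this

lemma nextHop_descend (hinj : Function.Injective h) (hxv : x < v)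
    (hd : h (nextHop h v x) < h x) : ∀ t, x < t → t ≤ v → h t < h x := by
  obtain ⟨he, hxy, hyv, hmax⟩ := nextHop_spec h hxv
  by_contra hcon
  push_neg at hcon
  obtain ⟨t, hxt, htv, hht⟩ := hcon
  have hht : h x < h t := lt_of_le_of_ne hht fun e => (ne_of_lt hxt) (hinj e)
  classical
  have hne' : (Finset.univ.filter (fun z => x < z ∧ z ≤ v ∧ h x < h z)).Nonempty :=
    ⟨t, by rw [Finset.mem_filter]; exact ⟨Finset.mem_univ _, hxt, htv, hht⟩⟩
  obtain ⟨r, hrm⟩ := Finset.min_of_nonempty hne'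
  have hrmem := Finset.mem_of_min hrm
  rw [Finset.mem_filter] at hrmem
  obtain ⟨-, hxr, hrv, hhr⟩ := hrmem
  have hedge : IsEdge h x r := by
    refine ⟨ne_of_lt hxr, ?_⟩
    intro z h1 h2
    rw [min_eq_left hxr.le] at h1
    rw [max_eq_right hxr.le] at h2
    have hzns : z ∉ Finset.univ.filter (fun z => x < z ∧ z ≤ v ∧ h x < h z) := by
      intro hz
      have := Finset.min_le hz
      rw [hrm] at this
      exact absurd (WithTop.coe_le_coe.1 this) (not_le.2 h2)
    rw [Finset.mem_filter] at hzns
    push_neg at hzns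
    have hzv : z ≤ v := le_of_lt (lt_of_lt_of_le h2 hrv)
    have := hzns (Finset.mem_univ _) h1 hzv
    have hzx : h z < h x := lt_of_le_of_ne this fun e => (ne_of_lt h1) (hinj e).symm
    exact lt_min hzx (hzx.trans hhr)
  have hry : r ≤ nextHop h v x := hmax r hedge hxr hrv
  have hrny : r ≠ nextHop h v x := fun e => absurd (e ▸ hhr) (not_lt.2 hd.le)
  have := isEdge_between hxy he hxr (lt_of_le_of_ne hry hrny)
  exact absurd (lt_of_lt_of_le this (min_le_left _ _)) (not_lt.2 hhr.le)

lemma record_step (h : Fin n → α) (hxv : x < v) (hA : isRecord h u x)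
    (hup : h x < h (nextHop h v x)) : isRecord h u (nextHop h v x) := by
  obtain ⟨he, hxy, hyv, -⟩ := nextHop_spec h hxv
  intro z h1 h2
  rcases lt_trichotomy z x with hz | hz | hz
  · exact (hA z h1 hz).trans hup
  · subst hz; exact hup
  · exact lt_of_lt_of_le (isEdge_between hxy he hz h2) (min_le_right _ _)

lemma dom_step (hinj : Function.Injective h) (hxv : x < v)
    (hD : ∀ t, x < t → t ≤ v → h t < h x) :
    ∀ t, nextHop h v x < t → t ≤ v → h t < h (nextHop h v x) := by
  obtain ⟨he, hxy, hyv, hmax⟩ := nextHop_spec h hxv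
  set y := nextHop h v x with hy
  intro t hyt htv
  by_contra hc
  have hc : h y < h t := lt_of_le_of_ne (not_lt.1 hc) fun e => (ne_of_lt hyt) (hinj e)
  classical
  set s'' := Finset.univ.filter (fun z => y < z ∧ z ≤ v) with hs''
  have hne'' : s''.Nonempty := ⟨t, by rw [hs'', Finset.mem_filter]; exact ⟨Finset.mem_univ _, hyt, htv⟩⟩
  obtain ⟨M, hMmem, hMmax⟩ := s''.exists_max_image h hne''
  have htmem : t ∈ s'' := by rw [hs'', Finset.mem_filter]; exact ⟨Finset.mem_univ _, hyt, htv⟩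
  rw [hs'', Finset.mem_filter] at hMmem
  obtain ⟨-, hyM, hMv⟩ := hMmem
  have hxM : x < M := hxy.trans hyM
  have hhyM : h y < h M := hc.trans_le (hMmax t htmem)
  have hhMx : h M < h x := hD M hxM hMv
  have hedge : IsEdge h x M := by
    refine ⟨ne_of_lt hxM, ?_⟩
    intro z h1 h2
    rw [min_eq_left hxM.le] at h1
    rw [max_eq_right hxM.le] at h2
    refine lt_min (hD z h1 (le_of_lt (lt_of_lt_of_le h2 hMv))) ?_
    rcases lt_trichotomy z y with hz | hz | hz
    · exact (lt_of_lt_of_le (isEdge_between hxy he h1 hz) (min_le_right _ _)).trans hhyM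
    · subst hz; exact hhyM
    · have hzmem : z ∈ s'' := by
        rw [hs'', Finset.mem_filter]
        exact ⟨Finset.mem_univ _, hz, le_of_lt (lt_of_lt_of_le h2 hMv)⟩
      exact lt_of_le_of_ne (hMmax z hzmem) fun e => (ne_of_lt h2) (hinj e)
  exact absurd (hmax M hedge hxM hMv) (not_le.2 hyM)

lemma inv_step (hinj : Function.Injective h) (hxv : x < v)
    (hInv : isRecord h u x ∨ ∀ t, x < t → t ≤ v → h t < h x) :
    isRecord h u (nextHop h v x) ∨
      ∀ t, nextHop h v x < t → t ≤ v → h t < h (nextHop h v x) := by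
  obtain ⟨he, hxy, hyv, -⟩ := nextHop_spec h hxv
  rcases lt_or_gt_of_ne (fun e => (ne_of_lt hxy) (hinj e)) with hud | hud
  · -- ascending step
    rcases hInv with hA | hD
    · exact Or.inl (record_step h hxv hA hud)
    · exact absurd (hD _ hxy hyv) (not_lt.2 hud.le)
  · -- descending step
    refine Or.inr (dom_step hinj hxv ?_)
    rcases hInv with hA | hD
    · exact nextHop_descend hinj hxv hud
    · exact hD

lemma route_pair_record (hinj : Function.Injective h) :
    ∀ (fuel : ℕ) (x : Fin n), u ≤ x → x ≤ v →
      (isRecord h u x ∨ ∀ t, x < t → t ≤ v → h t < h x) →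
      ∀ (l₁ : List (Fin n)) (a b : Fin n) (l₂ : List (Fin n)),
        routeAux h v fuel x = l₁ ++ a :: b :: l₂ → h a < h b → isRecord h u b := by
  intro fuel
  induction fuel with
  | zero =>
    intro x _ _ _ l₁ a b l₂ heq _
    exfalso
    have := congrArg List.length heq
    simp [routeAux] at this
    omega
  | succ f ih =>
    intro x hux hxlev hInv l₁ a b l₂ heq hab
    by_cases hxeq : x = v
    · exfalso
      rw [routeAux, if_pos hxeq] at heq
      have := congrArg List.length heq
      simp at this
      omega
    · have hxv : x < v := lt_of_le_of_ne hxlev hxeq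
      obtain ⟨he, hxy, hyv, -⟩ := nextHop_spec h hxv
      rw [routeAux, if_neg hxeq] at heq
      cases l₁ with
      | nil =>
        simp only [List.nil_append, List.cons.injEq] at heq
        obtain ⟨hax, heq2⟩ := heq
        obtain ⟨t, ht⟩ := routeAux_head h v f (nextHop h v x)
        rw [ht] at heq2
        injection heq2 with hby _
        subst hax
        subst hby
        rcases hInv with hA | hD
        · exact record_step h hxv hA hab
        · exact absurd (hD _ hxy hyv) (not_lt.2 hab.le)
      | cons c l₁' =>
        simp only [List.cons_append, List.cons.injEq] at heq
        exact ih (nextHop h v x) (hux.trans hxy.le) hyv (inv_step hinj hxv hInv)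
          l₁' a b l₂ heq.2 hab

lemma record_reach (hinj : Function.Injective h) (hrec : isRecord h u w) (hwv : w ≤ v) :
    ∀ (fuel : ℕ) (x : Fin n), u ≤ x → x < w → (w : ℕ) - (x : ℕ) ≤ fuel →
      ∃ (l₁ l₂ : List (Fin n)) (a : Fin n),
        routeAux h v fuel x = l₁ ++ a :: w :: l₂ ∧ h a < h w := by
  intro fuel
  induction fuel with
  | zero =>
    intro x _ hxw hle
    exfalso
    have : (x : ℕ) < (w : ℕ) := hxw
    omega
  | succ f ih =>
    intro x hux hxw hle
    have hxv : x < v := lt_of_lt_of_le hxw hwv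
    have hxne : x ≠ v := ne_of_lt hxv
    obtain ⟨he, hxy, hyv, -⟩ := nextHop_spec h hxv
    have hyw : nextHop h v x ≤ w := by
      by_contra hc
      push_neg at hc
      have := isEdge_between hxy he hxw hc
      exact absurd (lt_of_lt_of_le this (min_le_left _ _)) (not_lt.2 (hrec x hux hxw).le)
    rcases eq_or_lt_of_le hyw with hyw | hyw
    · obtain ⟨t, ht⟩ := routeAux_head h v f (nextHop h v x)
      refine ⟨[], t, x, ?_, hrec x hux hxw⟩
      rw [routeAux, if_neg hxne, ht, hyw]
      simp
    · have hxyn : (x : ℕ) < (nextHop h v x : ℕ) := hxy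
      have hywn : (nextHop h v x : ℕ) < (w : ℕ) := hyw
      obtain ⟨l₁, l₂, a, heq, hha⟩ :=
        ih (nextHop h v x) (hux.trans hxy.le) hyw (by omega)
      exact ⟨x :: l₁, l₂, a, by rw [routeAux, if_neg hxne, heq]; simp, hha⟩

/-- The deterministic characterization: `w` is entered with a height increase on the route
from `u` to `v` iff `w` is a record of `h` over `[u, w]`. -/
lemma ascendsTo_iff_isRecord (hinj : Function.Injective h) (huw : u < w) (hwv : w ≤ v) :
    ascendsTo h u v w ↔ isRecord h u w := by
  constructor
  · rintro ⟨l₁, l₂, a, heq, hab⟩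
    exact route_pair_record hinj n u le_rfl (le_trans huw.le hwv)
      (Or.inl fun z h1 h2 => ((lt_irrefl _ (lt_of_le_of_lt h1 h2)).elim))
      l₁ a w l₂ heq hab
  · intro hrec
    have hwn : (w : ℕ) - (u : ℕ) ≤ n := by have := w.isLt; omega
    obtain ⟨l₁, l₂, a, heq, hha⟩ := record_reach hinj hrec hwv n u le_rfl huw hwn
    exact ⟨l₁, l₂, a, heq, hha⟩

end Det



lemma lintegral_pow_Ioo (m : ℕ) :
    ∫⁻ t in Set.Ioo (0:ℝ) 1, (ENNReal.ofReal t) ^ m = ((m + 1 : ℕ) : ℝ≥0∞)⁻¹ := by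
  rw [setLIntegral_congr_fun measurableSet_Ioo
    (fun t (ht : t ∈ Set.Ioo (0:ℝ) 1) => (ENNReal.ofReal_pow ht.1.le m).symm)]
  have hint : Integrable (fun t : ℝ => t ^ m) (volume.restrict (Set.Ioo (0:ℝ) 1)) :=
    ((intervalIntegral.intervalIntegrable_pow (μ := volume) (n := m) (a := 0) (b := 1)).1).mono_set
      Set.Ioo_subset_Ioc_self
  have hnn : 0 ≤ᵐ[volume.restrict (Set.Ioo (0:ℝ) 1)] fun t : ℝ => t ^ m := by
    refine (ae_restrict_iff' measurableSet_Ioo).2 (ae_of_all _ fun t ht => ?_)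
    exact pow_nonneg ht.1.le m
  rw [← ofReal_integral_eq_lintegral_ofReal hint hnn]
  have : ∫ t in Set.Ioo (0:ℝ) 1, t ^ m = ((m : ℝ) + 1)⁻¹ := by
    rw [← integral_Ioc_eq_integral_Ioo, ← intervalIntegral.integral_of_le zero_le_one,
      integral_pow]
    push_cast
    ring
  rw [this, ENNReal.ofReal_inv_of_pos (by positivity)]
  congr 1
  rw [show ((m : ℝ) + 1) = ((m + 1 : ℕ) : ℝ) by push_cast; ring, ENNReal.ofReal_natCast]




lemma record_prob {n : ℕ} {Ω : Type*} [MeasurableSpace Ω] (μ : Measure Ω) [IsProbabilityMeasure μ]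
    (H : Fin n → Ω → ℝ) (hmeas : ∀ i, Measurable (H i))
    (hindep : iIndepFun H μ)
    (hunif : ∀ i, Measure.map (H i) μ = volume.restrict (Set.Ioo (0 : ℝ) 1))
    (u w : Fin n) :
    μ {ω | ∀ x : Fin n, u ≤ x → x < w → H x ω < H w ω} =
      (((w : ℕ) - (u : ℕ) + 1 : ℕ) : ℝ≥0∞)⁻¹ := by
  classical
  set T : Finset (Fin n) := Finset.Ico u w with hT
  have hmcard : T.card = (w : ℕ) - (u : ℕ) := by rw [hT, Fin.card_Ico]
  set X : Ω → (↥T → ℝ) := fun ω i => H i.1 ω with hX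
  have hXmeas : Measurable X := measurable_pi_lambda _ fun i => hmeas i.1
  have hdisj : Disjoint ({w} : Finset (Fin n)) T := by
    rw [Finset.disjoint_singleton_left, hT, Finset.mem_Ico]
    rintro ⟨-, hww⟩
    exact lt_irrefl _ hww
  have hpairind : IndepFun (H w) X μ := by
    have h1 := hindep.indepFun_finset {w} T hdisj hmeas
    exact h1.comp (measurable_pi_apply
      (⟨w, Finset.mem_singleton_self w⟩ : ({w} : Finset (Fin n)))) measurable_id
  set C : Set (ℝ × (↥T → ℝ)) := {p | ∀ i : ↥T, p.2 i < p.1} with hCdef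
  have hC : MeasurableSet C := by
    have : C = ⋂ i : ↥T, {p : ℝ × (↥T → ℝ) | p.2 i < p.1} := by ext p; simp [hCdef]
    rw [this]
    exact MeasurableSet.iInter fun i =>
      measurableSet_lt (measurable_snd.eval) measurable_fst
  have hmemT : ∀ x : Fin n, x ∈ T ↔ u ≤ x ∧ x < w := fun x => by
    rw [hT]; exact Finset.mem_Ico
  have hAeq : {ω | ∀ x : Fin n, u ≤ x → x < w → H x ω < H w ω}
      = (fun ω => (H w ω, X ω)) ⁻¹' C := by
    ext ω
    simp only [Set.mem_setOf_eq, Set.mem_preimage, hCdef, hX]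
    constructor
    · intro hh i
      exact hh i.1 ((hmemT i.1).1 i.2).1 ((hmemT i.1).1 i.2).2
    · intro hh x h1 h2
      exact hh ⟨x, (hmemT x).2 ⟨h1, h2⟩⟩
  have hSmeas : ∀ t : ℝ, MeasurableSet {g : ↥T → ℝ | ∀ i, g i < t} := by
    intro t
    have : {g : ↥T → ℝ | ∀ i, g i < t} = ⋂ i : ↥T, (fun g : ↥T → ℝ => g i) ⁻¹' Set.Iio t := by
      ext g; simp
    rw [this]
    exact MeasurableSet.iInter fun i => (measurable_pi_apply i) measurableSet_Iio
  have hinner : ∀ t : ℝ, (μ.map X) {g : ↥T → ℝ | ∀ i, g i < t}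
      = ∏ _i ∈ T, (volume.restrict (Set.Ioo (0:ℝ) 1)) (Set.Iio t) := by
    intro t
    rw [Measure.map_apply hXmeas (hSmeas t)]
    have hpre : X ⁻¹' {g : ↥T → ℝ | ∀ i, g i < t} = ⋂ i ∈ T, H i ⁻¹' Set.Iio t := by
      ext ω
      simp only [Set.mem_preimage, Set.mem_setOf_eq, Set.mem_iInter, hX, Set.mem_Iio,
        Subtype.forall]
    rw [hpre, hindep.meas_biInter (fun i _ => ⟨Set.Iio t, measurableSet_Iio, rfl⟩)]
    exact Finset.prod_congr rfl fun i _ => by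
      rw [← hunif i, Measure.map_apply (hmeas i) measurableSet_Iio]
  have huniIio : ∀ t ∈ Set.Ioo (0:ℝ) 1,
      (volume.restrict (Set.Ioo (0:ℝ) 1)) (Set.Iio t) = ENNReal.ofReal t := by
    intro t ht
    rw [Measure.restrict_apply measurableSet_Iio]
    have : Set.Iio t ∩ Set.Ioo 0 1 = Set.Ioo 0 t := by
      ext z
      simp only [Set.mem_inter_iff, Set.mem_Iio, Set.mem_Ioo]
      exact ⟨fun ⟨h1, h2, _⟩ => ⟨h2, h1⟩, fun ⟨h1, h2⟩ => ⟨h2, h1, h2.trans ht.2⟩⟩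
    rw [this, Real.volume_Ioo]
    simp
  rw [hAeq, ← Measure.map_apply ((hmeas w).prodMk hXmeas) hC,
    (indepFun_iff_map_prod_eq_prod_map_map (hmeas w).aemeasurable hXmeas.aemeasurable).1 hpairind,
    Measure.prod_apply hC, hunif w]
  have hcongr : ∫⁻ t in Set.Ioo (0:ℝ) 1, (μ.map X) (Prod.mk t ⁻¹' C)
      = ∫⁻ t in Set.Ioo (0:ℝ) 1, (ENNReal.ofReal t) ^ T.card := by
    refine setLIntegral_congr_fun measurableSet_Ioo (fun t ht => ?_)
    have hPre : Prod.mk t ⁻¹' C = {g : ↥T → ℝ | ∀ i, g i < t} := rfl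
    rw [hPre, hinner t, Finset.prod_const, huniIio t ht]
  rw [hcongr, lintegral_pow_Ioo, hmcard]


/-- In the Uniform model, fix `u < w ≤ v`. Then (whenever the heights are pairwise distinct)
`w` lies on the routing path from `u` to `v` with a height increase into `w` iff
`h w > h x` for all `x ∈ [u, w-1]`, and this event has probability exactly `1/(w-u+1)`. -/
theorem uniform_ascending_record
    (n : ℕ)
    {Ω : Type*} [MeasurableSpace Ω] (μ : Measure Ω) [IsProbabilityMeasure μ]
    (H : Fin n → Ω → ℝ) (hmeas : ∀ i, Measurable (H i))
    (hindep : iIndepFun H μ)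
    (hunif : ∀ i, Measure.map (H i) μ = volume.restrict (Set.Ioo (0 : ℝ) 1))
    (u v w : Fin n) (huw : u < w) (hwv : w ≤ v) :
    (∀ ω : Ω, Function.Injective (fun i => H i ω) →
      (ascendsTo (fun i => H i ω) u v w ↔ ∀ x : Fin n, u ≤ x → x < w → H x ω < H w ω)) ∧
    μ {ω | ∀ x : Fin n, u ≤ x → x < w → H x ω < H w ω} =
      (((w : ℕ) - (u : ℕ) + 1 : ℕ) : ℝ≥0∞)⁻¹ := by
  constructor
  · intro ω hinjω
    exact ascendsTo_iff_isRecord hinjω huw hwv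
  · exact record_prob μ H hmeas hindep hunif u w

end P2P
end

section
/- Let N = (V, h, E) be a continuous skip list network on V = {1,…,n} with pairwise distinct heights, and let u ≠ v be two nodes. Then the routing path from u to v consists of an ascending phase followed by a descending phase: if the heights along the routing path are h(x₀), h(x₁), …, h(x_k) with x₀ = u and x_k = v, then there exists an index m such that h(x₀) < h(x₁) < ⋯ < h(x_m) and h(x_m) > h(x_{m+1}) > ⋯ > h(x_k). -/
open scoped Classical ENNReal NNReal
open MeasureTheory ProbabilityTheory

namespace P2P

variable {n : ℕ}

lemma nextHop_spec_lt (g : Fin n → ℝ) (v x : Fin n) (hx : x < v) :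
    IsEdge g x (nextHop g v x) ∧ x < nextHop g v x ∧ nextHop g v x ≤ v ∧
      ∀ z, IsEdge g x z → x < z → z ≤ v → z ≤ nextHop g v x := by
  have hSne : (Finset.univ.filter fun y => IsEdge g x y ∧ x < y ∧ y ≤ v).Nonempty := by
    have hxv := Fin.lt_def.mp hx
    have hxn : x.1 + 1 < n := lt_of_le_of_lt hxv v.isLt
    refine ⟨⟨x.1 + 1, hxn⟩, ?_⟩
    have hlt : x < (⟨x.1 + 1, hxn⟩ : Fin n) := Fin.lt_def.mpr (by simp)
    simp only [Finset.mem_filter, Finset.mem_univ, true_and]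
    refine ⟨⟨Fin.ne_of_lt hlt, ?_⟩, hlt, Fin.le_def.mpr (by simpa using hxv)⟩
    intro w hw1 hw2
    rw [min_eq_left hlt.le] at hw1
    rw [max_eq_right hlt.le] at hw2
    have h1 := Fin.lt_def.mp hw1
    have h2 := Fin.lt_def.mp hw2
    simp at h2
    omega
  have hEq : nextHop g v x =
      (Finset.univ.filter fun y => IsEdge g x y ∧ x < y ∧ y ≤ v).max' hSne := by
    rw [nextHop, if_pos hx, ← Finset.coe_max' hSne, WithBot.unbotD_coe]
  have hmem := Finset.max'_mem _ hSne
  simp only [Finset.mem_filter, Finset.mem_univ, true_and] at hmem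
  rw [hEq]
  exact ⟨hmem.1, hmem.2.1, hmem.2.2, fun z h1 h2 h3 =>
    Finset.le_max' _ z (by simp only [Finset.mem_filter, Finset.mem_univ, true_and]; exact ⟨h1, h2, h3⟩)⟩

lemma nextHop_spec_gt (g : Fin n → ℝ) (v x : Fin n) (hx : v < x) :
    IsEdge g x (nextHop g v x) ∧ nextHop g v x < x ∧ v ≤ nextHop g v x ∧
      ∀ z, IsEdge g x z → v ≤ z → z < x → nextHop g v x ≤ z := by
  have hSne : (Finset.univ.filter fun y => IsEdge g x y ∧ v ≤ y ∧ y < x).Nonempty := by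
    have hvx := Fin.lt_def.mp hx
    have hxn : x.1 - 1 < n := lt_of_le_of_lt (Nat.sub_le _ _) x.isLt
    refine ⟨⟨x.1 - 1, hxn⟩, ?_⟩
    have hlt : (⟨x.1 - 1, hxn⟩ : Fin n) < x := Fin.lt_def.mpr (by simp; omega)
    simp only [Finset.mem_filter, Finset.mem_univ, true_and]
    refine ⟨⟨Fin.ne_of_gt hlt, ?_⟩, Fin.le_def.mpr (by simp; omega), hlt⟩
    intro w hw1 hw2
    rw [min_eq_right hlt.le] at hw1
    rw [max_eq_left hlt.le] at hw2
    have h1 := Fin.lt_def.mp hw1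
    have h2 := Fin.lt_def.mp hw2
    simp at h1
    omega
  have hEq : nextHop g v x =
      (Finset.univ.filter fun y => IsEdge g x y ∧ v ≤ y ∧ y < x).min' hSne := by
    rw [nextHop, if_neg (asymm hx), if_pos hx, ← Finset.coe_min' hSne, WithTop.untopD_coe]
  have hmem := Finset.min'_mem _ hSne
  simp only [Finset.mem_filter, Finset.mem_univ, true_and] at hmem
  rw [hEq]
  exact ⟨hmem.1, hmem.2.2, hmem.2.1, fun z h1 h2 h3 =>
    Finset.min'_le _ z (by simp only [Finset.mem_filter, Finset.mem_univ, true_and]; exact ⟨h1, h2, h3⟩)⟩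


lemma descend_lt (g : Fin n → ℝ) (hg : Function.Injective g) (v x z : Fin n) (hx : x < v)
    (hy : g (nextHop g v x) < g x) (hz1 : nextHop g v x < z) (hz2 : z ≤ v) :
    g z < g (nextHop g v x) := by
  obtain ⟨hedge, hxy, hyv, hmaxi⟩ := nextHop_spec_lt g v x hx
  set y := nextHop g v x with hydef
  by_contra hcon
  have hzy : g y < g z :=
    lt_of_le_of_ne (not_lt.mp hcon) (fun e => Fin.ne_of_lt hz1 (hg e))
  set T := Finset.univ.filter (fun w : Fin n => y < w ∧ w ≤ v ∧ g y < g w) with hT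
  have hTne : T.Nonempty := ⟨z, by
    simp only [hT, Finset.mem_filter, Finset.mem_univ, true_and]
    exact ⟨hz1, hz2, hzy⟩⟩
  set z0 := T.min' hTne with hz0
  have hz0mem := T.min'_mem hTne
  simp only [hT, Finset.mem_filter, Finset.mem_univ, true_and] at hz0mem
  obtain ⟨h1, h2, h3⟩ := hz0mem
  have hxlt : x < z0 := hxy.trans h1
  have hsmall : ∀ w : Fin n, y < w → w < z0 → g w < g y := by
    intro w hw1 hw2
    have hwT : w ∉ T := fun hmem => absurd (T.min'_le w hmem) (not_le.mpr hw2)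
    simp only [hT, Finset.mem_filter, Finset.mem_univ, true_and, not_and, not_lt] at hwT
    have hle := hwT hw1 (le_of_lt (lt_of_lt_of_le hw2 h2))
    exact lt_of_le_of_ne hle (fun e => Fin.ne_of_lt hw1 (hg e.symm))
  have hminxz : g y < min (g x) (g z0) := lt_min hy h3
  have hedge2 : IsEdge g x z0 := by
    refine ⟨Fin.ne_of_lt hxlt, ?_⟩
    intro w hw1 hw2
    rw [min_eq_left hxlt.le] at hw1
    rw [max_eq_right hxlt.le] at hw2
    rcases lt_trichotomy w y with hlt | heq | hgt
    · have hw := hedge.2 w (by rwa [min_eq_left hxy.le]) (by rwa [max_eq_right hxy.le])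
      exact lt_trans (lt_of_lt_of_le hw (min_le_right _ _)) hminxz
    · rw [heq]; exact hminxz
    · exact lt_trans (hsmall w hgt hw2) hminxz
  exact absurd (hmaxi z0 hedge2 hxlt h2) (not_le.mpr h1)

lemma descend_gt (g : Fin n → ℝ) (hg : Function.Injective g) (v x z : Fin n) (hx : v < x)
    (hy : g (nextHop g v x) < g x) (hz1 : z < nextHop g v x) (hz2 : v ≤ z) :
    g z < g (nextHop g v x) := by
  obtain ⟨hedge, hxy, hyv, hmini⟩ := nextHop_spec_gt g v x hx
  set y := nextHop g v x with hydef
  by_contra hcon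
  have hzy : g y < g z :=
    lt_of_le_of_ne (not_lt.mp hcon) (fun e => Fin.ne_of_gt hz1 (hg e))
  set T := Finset.univ.filter (fun w : Fin n => w < y ∧ v ≤ w ∧ g y < g w) with hT
  have hTne : T.Nonempty := ⟨z, by
    simp only [hT, Finset.mem_filter, Finset.mem_univ, true_and]
    exact ⟨hz1, hz2, hzy⟩⟩
  set z0 := T.max' hTne with hz0
  have hz0mem := T.max'_mem hTne
  simp only [hT, Finset.mem_filter, Finset.mem_univ, true_and] at hz0mem
  obtain ⟨h1, h2, h3⟩ := hz0mem
  have hxlt : z0 < x := h1.trans hxy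
  have hsmall : ∀ w : Fin n, w < y → z0 < w → g w < g y := by
    intro w hw1 hw2
    have hwT : w ∉ T := fun hmem => absurd (T.le_max' w hmem) (not_le.mpr hw2)
    simp only [hT, Finset.mem_filter, Finset.mem_univ, true_and, not_and, not_lt] at hwT
    have hle := hwT hw1 (le_trans h2 hw2.le)
    exact lt_of_le_of_ne hle (fun e => Fin.ne_of_lt hw1 (hg e))
  have hminxz : g y < min (g x) (g z0) := lt_min hy h3
  have hedge2 : IsEdge g x z0 := by
    refine ⟨Fin.ne_of_gt hxlt, ?_⟩
    intro w hw1 hw2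
    rw [min_eq_right hxlt.le] at hw1
    rw [max_eq_left hxlt.le] at hw2
    rcases lt_trichotomy w y with hlt | heq | hgt
    · exact lt_trans (hsmall w hlt hw1) hminxz
    · rw [heq]; exact hminxz
    · have hw := hedge.2 w (by rwa [min_eq_right hxy.le]) (by rwa [max_eq_left hxy.le])
      exact lt_trans (lt_of_lt_of_le hw (min_le_right _ _)) hminxz
  exact absurd (hmini z0 hedge2 h2 hxlt) (not_le.mpr h1)

lemma nextHop_ne (g : Fin n → ℝ) (v x : Fin n) (hne : x ≠ v) : nextHop g v x ≠ x := by
  rcases lt_or_gt_of_ne hne with h | h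
  · exact Fin.ne_of_gt (nextHop_spec_lt g v x h).2.1
  · exact Fin.ne_of_lt (nextHop_spec_gt g v x h).2.1

lemma key_step (g : Fin n → ℝ) (hg : Function.Injective g) (v x : Fin n) (hne : x ≠ v)
    (hd : g (nextHop g v x) < g x) (hnv : nextHop g v x ≠ v) :
    g (nextHop g v (nextHop g v x)) < g (nextHop g v x) := by
  rcases lt_or_gt_of_ne hne with h | h
  · have h2 : nextHop g v x < v := lt_of_le_of_ne (nextHop_spec_lt g v x h).2.2.1 hnv
    obtain ⟨-, ha, hb, -⟩ := nextHop_spec_lt g v (nextHop g v x) h2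
    exact descend_lt g hg v x _ h hd ha hb
  · have h2 : v < nextHop g v x := lt_of_le_of_ne (nextHop_spec_gt g v x h).2.2.1 (Ne.symm hnv)
    obtain ⟨-, ha, hb, -⟩ := nextHop_spec_gt g v (nextHop g v x) h2
    exact descend_gt g hg v x _ h hd ha hb

lemma routeAux_length_pos (g : Fin n → ℝ) (v : Fin n) (fuel : ℕ) (x : Fin n) :
    0 < (routeAux g v fuel x).length := by
  cases fuel with
  | zero => simp [routeAux]
  | succ f => rw [routeAux]; split <;> simp

lemma routeAux_getD_zero (g : Fin n → ℝ) (v : Fin n) (fuel : ℕ) (x d : Fin n) :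
    (routeAux g v fuel x).getD 0 d = x := by
  cases fuel with
  | zero => simp [routeAux]
  | succ f => rw [routeAux]; split <;> simp

lemma routeAux_step (g : Fin n → ℝ) (v d : Fin n) :
    ∀ (fuel : ℕ) (x : Fin n) (i : ℕ), i + 1 < (routeAux g v fuel x).length →
      (routeAux g v fuel x).getD i d ≠ v ∧
      (routeAux g v fuel x).getD (i + 1) d = nextHop g v ((routeAux g v fuel x).getD i d) := by
  intro fuel
  induction fuel with
  | zero => intro x i hi; simp [routeAux] at hi
  | succ f ih =>
    intro x i hi
    by_cases hxv : x = v
    · rw [routeAux, if_pos hxv] at hi; simp at hi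
    · rw [routeAux, if_neg hxv] at hi ⊢
      cases i with
      | zero =>
        simp only [List.getD_cons_zero, List.getD_cons_succ]
        exact ⟨hxv, routeAux_getD_zero g v f (nextHop g v x) d⟩
      | succ j =>
        simp only [List.getD_cons_succ]
        exact ih (nextHop g v x) j (by simpa using hi)


/-- In a continuous skip list network with pairwise distinct heights, the routing path between
any two distinct nodes is first strictly ascending in height and then strictly descending:
there is an index `m` such that the heights along the path strictly increase up to position `m`
and strictly decrease afterwards. -/
theorem route_ascending_then_descending
    (n : ℕ) (g : Fin n → ℝ) (hg : Function.Injective g)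
    (u v : Fin n) (huv : u ≠ v) :
    ∃ m : ℕ, m < (route g u v).length ∧
      (∀ i : ℕ, i < m →
        g ((route g u v).getD i u) < g ((route g u v).getD (i + 1) u)) ∧
      (∀ i : ℕ, m ≤ i → i + 1 < (route g u v).length →
        g ((route g u v).getD (i + 1) u) < g ((route g u v).getD i u)) := by
  set L := route g u v with hLdef
  have hlen : 0 < L.length := routeAux_length_pos g v n u
  have hstep : ∀ i : ℕ, i + 1 < L.length →
      L.getD i u ≠ v ∧ L.getD (i + 1) u = nextHop g v (L.getD i u) :=
    fun i hi => routeAux_step g v u n u i hi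
  have key : ∀ i, i + 1 < L.length → g (L.getD (i + 1) u) < g (L.getD i u) →
      i + 2 < L.length → g (L.getD (i + 2) u) < g (L.getD (i + 1) u) := by
    intro i hi hd hi2
    obtain ⟨hne, heq⟩ := hstep i hi
    obtain ⟨hne2, heq2⟩ := hstep (i + 1) hi2
    rw [heq2, heq]
    rw [heq] at hd hne2
    exact key_step g hg v _ hne hd hne2
  have chain : ∀ i, i + 1 < L.length → g (L.getD (i + 1) u) < g (L.getD i u) →
      ∀ d : ℕ, i + d + 1 < L.length → g (L.getD (i + d + 1) u) < g (L.getD (i + d) u) := by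
    intro i hi hd d
    induction d with
    | zero => intro _; simpa using hd
    | succ e ihe =>
      intro hlt
      have h1 : i + e + 1 < L.length := by omega
      have h2 : i + e + 2 < L.length := by omega
      have h3 := key (i + e) h1 (ihe h1) h2
      have e1 : i + (e + 1) + 1 = i + e + 2 := by omega
      have e2 : i + (e + 1) = i + e + 1 := by omega
      rw [e1, e2]
      exact h3
  have hascend : ∀ i, i + 1 < L.length → ¬ g (L.getD (i + 1) u) < g (L.getD i u) →
      g (L.getD i u) < g (L.getD (i + 1) u) := by
    intro i hi hnot
    obtain ⟨hne, heq⟩ := hstep i hi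
    have hne2 : L.getD (i + 1) u ≠ L.getD i u := by
      rw [heq]; exact nextHop_ne g v _ hne
    exact lt_of_le_of_ne (not_lt.mp hnot) (fun e => hne2 (hg e.symm))
  by_cases hex : ∃ i, i + 1 < L.length ∧ g (L.getD (i + 1) u) < g (L.getD i u)
  · set m := Nat.find hex with hm
    obtain ⟨hm1, hm2⟩ := Nat.find_spec hex
    refine ⟨m, by omega, ?_, ?_⟩
    · intro i hilt
      have hi1 : i + 1 < L.length := by omega
      have hnot := Nat.find_min hex hilt
      exact hascend i hi1 (fun hdd => hnot ⟨hi1, hdd⟩)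
    · intro i hmi hi1
      obtain ⟨d, rfl⟩ : ∃ d, i = m + d := ⟨i - m, by omega⟩
      exact chain m hm1 hm2 d hi1
  · refine ⟨L.length - 1, by omega, ?_, ?_⟩
    · intro i hilt
      have hi1 : i + 1 < L.length := by omega
      exact hascend i hi1 (fun hdd => hex ⟨i, hi1, hdd⟩)
    · intro i h1 h2
      exact absurd h1 (by omega)

end P2P
end
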